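/- Let Γ be a discrete subgroup of SL(2,ℝ), let m ≥ 1 and ξ ∈ ℤ with ξ > 2m, let δ ≥ 0, and let F(z,X) ∈ QP^m_ξ(Γ) be a quasimodular polynomial. Then F(z,X) − m! · (Π^δ_m(Ξ̂_δ(𝔖_m F)))(z,X) is a polynomial of degree at most m−1 in X and is a quasimodular polynomial belonging to QP^{m−1}_ξ(Γ), where for f = 𝔖_m F (a modular form of weight ξ−2m) one sets (Ξ̂_δ f)(z,X) = (ξ−2m−1)! Σ_{ℓ≥0} [f^{(ℓ)}(z) / (ℓ! (ℓ+ξ−2m−1)!)] X^{ℓ+δ}. -/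

import Mathlib

noncomputable section

open Complex Polynomial

/-- The upper half plane `ℍ`, as a subset of `ℂ`. -/
def UHP : Set ℂ := {z : ℂ | 0 < z.im}

/-- `SL(2, ℝ)`. -/
abbrev SL2R := Matrix.SpecialLinearGroup (Fin 2) ℝ

/-- `GL⁺(2, ℝ)`, the group of real 2×2 matrices of positive determinant. -/
abbrev GL2P := Matrix.GLPos (Fin 2) ℝ

/-- Topology on `SL(2,ℝ)` induced from the space of matrices (used to speak of
discrete subgroups of `SL(2,ℝ)`). -/
instance : TopologicalSpace SL2R :=
  TopologicalSpace.induced (fun g : SL2R => (g : Matrix (Fin 2) (Fin 2) ℝ)) inferInstance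

/-- A function belongs to `𝓕` if it is holomorphic on the upper half plane. -/
def Hol (f : ℂ → ℂ) : Prop := DifferentiableOn ℂ f UHP

/-- `𝔍(γ, z) = cz + d` for `γ ∈ SL(2, ℝ)`. -/
def jJ (γ : SL2R) (z : ℂ) : ℂ := (γ 1 0 : ℝ) * z + (γ 1 1 : ℝ)

/-- `𝔎(γ, z) = c/(cz + d)` for `γ ∈ SL(2, ℝ)`. -/
def kK (γ : SL2R) (z : ℂ) : ℂ := (γ 1 0 : ℝ) / jJ γ z

/-- `γ z = (az+b)/(cz+d)` for `γ ∈ SL(2, ℝ)`. -/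
def mact (γ : SL2R) (z : ℂ) : ℂ := ((γ 0 0 : ℝ) * z + (γ 0 1 : ℝ)) / jJ γ z

/-- The underlying real matrix of an element of `GL⁺(2, ℝ)`. -/
def gmat (α : GL2P) : Matrix (Fin 2) (Fin 2) ℝ :=
  ((α : Matrix.GeneralLinearGroup (Fin 2) ℝ) : Matrix (Fin 2) (Fin 2) ℝ)

/-- The determinant of an element of `GL⁺(2, ℝ)`. -/
def gdet (α : GL2P) : ℝ := (gmat α).det

/-- `𝔍(α, z) = cz + d` for `α ∈ GL⁺(2, ℝ)`. -/
def gJ (α : GL2P) (z : ℂ) : ℂ := (gmat α 1 0 : ℝ) * z + (gmat α 1 1 : ℝ)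

/-- `𝔎(α, z) = c/(cz + d)` for `α ∈ GL⁺(2, ℝ)`. -/
def gK (α : GL2P) (z : ℂ) : ℂ := (gmat α 1 0 : ℝ) / gJ α z

/-- `α z = (az+b)/(cz+d)` for `α ∈ GL⁺(2, ℝ)`. -/
def gact (α : GL2P) (z : ℂ) : ℂ := ((gmat α 0 0 : ℝ) * z + (gmat α 0 1 : ℝ)) / gJ α z

/-- `(det α)^(μ/2)` for `α ∈ GL⁺(2, ℝ)` and `μ ∈ ℤ`. -/
def detpow (α : GL2P) (μ : ℤ) : ℂ := ((gdet α ^ ((μ : ℝ) / 2) : ℝ) : ℂ)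

/-- The weight-`ξ` action `F ∥_ξ γ` of `SL(2,ℝ)` on polynomials over `𝓕`:
`(F ∥_ξ γ)(z, X) = 𝔍(γ,z)^(-ξ) F(γz, 𝔍(γ,z)^2 (X - 𝔎(γ,z)))`. -/
def polyAct (ξ : ℤ) (F : ℂ → Polynomial ℂ) (γ : SL2R) : ℂ → Polynomial ℂ := fun z =>
  Polynomial.C (jJ γ z ^ (-ξ)) *
    (F (mact γ z)).comp (Polynomial.C (jJ γ z ^ 2) * (Polynomial.X - Polynomial.C (kK γ z)))

/-- The weight-`ξ` action `F ∥_ξ α` of `GL⁺(2,ℝ)` on polynomials over `𝓕`: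
`(F ∥_ξ α)(z, X) = (det α)^(ξ/2) 𝔍(α,z)^(-ξ) F(αz, (det α)⁻¹ 𝔍(α,z)^2 (X - 𝔎(α,z)))`. -/
def polyActG (ξ : ℤ) (F : ℂ → Polynomial ℂ) (α : GL2P) : ℂ → Polynomial ℂ := fun z =>
  Polynomial.C (detpow α ξ * gJ α z ^ (-ξ)) *
    (F (gact α z)).comp
      (Polynomial.C ((gdet α : ℂ)⁻¹ * gJ α z ^ 2) * (Polynomial.X - Polynomial.C (gK α z)))

/-- The weight-`l` action `Φ |^J_l γ` of `SL(2,ℝ)` on formal power series over `𝓕`: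
`(Φ |^J_l γ)(z, X) = 𝔍(γ,z)^(-l) e^(-𝔎(γ,z) X) Φ(γz, 𝔍(γ,z)^(-2) X)`. -/
def psAct (l : ℤ) (Φ : ℂ → PowerSeries ℂ) (γ : SL2R) : ℂ → PowerSeries ℂ := fun z =>
  PowerSeries.C (jJ γ z ^ (-l)) *
    (PowerSeries.mk fun n => (-(kK γ z)) ^ n / (n.factorial : ℂ)) *
    PowerSeries.rescale (jJ γ z ^ (-2 : ℤ)) (Φ (mact γ z))

/-- The weight-`l` action `Φ |^J_l α` of `GL⁺(2,ℝ)` on formal power series over `𝓕`: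
`(Φ |^J_l α)(z, X) = (det α)^(l/2) 𝔍(α,z)^(-l) e^(-𝔎(α,z) X) Φ(αz, (det α) 𝔍(α,z)^(-2) X)`. -/
def psActG (l : ℤ) (Φ : ℂ → PowerSeries ℂ) (α : GL2P) : ℂ → PowerSeries ℂ := fun z =>
  PowerSeries.C (detpow α l * gJ α z ^ (-l)) *
    (PowerSeries.mk fun n => (-(gK α z)) ^ n / (n.factorial : ℂ)) *
    PowerSeries.rescale ((gdet α : ℂ) * gJ α z ^ (-2 : ℤ)) (Φ (gact α z))

/-- The map `Π^δ_m`: for `Φ(z,X) = Σ_k φ_k(z) X^(k+δ)`,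
`(Π^δ_m Φ)(z, X) = Σ_{r=0}^m (1/r!) φ_(m-r)(z) X^r`. -/
def PiDM (δ m : ℕ) (Φ : ℂ → PowerSeries ℂ) : ℂ → Polynomial ℂ := fun z =>
  ∑ r ∈ Finset.range (m + 1),
    Polynomial.C ((PowerSeries.coeff (m - r + δ) (Φ z)) / (r.factorial : ℂ)) *
      Polynomial.X ^ r

/-- Membership in `𝓕_m[X]`: degree at most `m` and holomorphic coefficients. -/
def InFmX (m : ℕ) (F : ℂ → Polynomial ℂ) : Prop :=
  (∀ z : ℂ, (F z).degree ≤ (m : WithBot ℕ)) ∧ ∀ r : ℕ, Hol fun z => (F z).coeff r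

/-- Membership in `𝓕[[X]]_δ = X^δ 𝓕[[X]]` with holomorphic coefficients. -/
def InFXd (δ : ℕ) (Φ : ℂ → PowerSeries ℂ) : Prop :=
  (∀ z : ℂ, ∀ k < δ, PowerSeries.coeff k (Φ z) = 0) ∧
    ∀ k : ℕ, Hol fun z => PowerSeries.coeff k (Φ z)

/-- `QP^m_ξ(Γ)`: quasimodular polynomials of weight `ξ` and degree at most `m` for `Γ`. -/
def IsQP (Γ : Subgroup SL2R) (ξ : ℤ) (m : ℕ) (F : ℂ → Polynomial ℂ) : Prop :=
  InFmX m F ∧ ∀ γ ∈ Γ, ∀ z ∈ UHP, polyAct ξ F γ z = F z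

/-- `J_l(Γ)_δ`: Jacobi-like forms of weight `l` for `Γ` lying in `𝓕[[X]]_δ`. -/
def IsJF (Γ : Subgroup SL2R) (l : ℤ) (δ : ℕ) (Φ : ℂ → PowerSeries ℂ) : Prop :=
  InFXd δ Φ ∧ ∀ γ ∈ Γ, ∀ z ∈ UHP, psAct l Φ γ z = Φ z

/-- `M_μ(Γ)`: modular forms of weight `μ` for `Γ` (cusp conditions suppressed). -/
def IsModular (Γ : Subgroup SL2R) (μ : ℤ) (f : ℂ → ℂ) : Prop :=
  Hol f ∧ ∀ γ ∈ Γ, ∀ z ∈ UHP, jJ γ z ^ (-μ) * f (mact γ z) = f z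

/-- `QM^m_ξ(Γ)`: quasimodular forms of weight `ξ` and depth at most `m` for `Γ`. -/
def IsQM (Γ : Subgroup SL2R) (ξ : ℤ) (m : ℕ) (f : ℂ → ℂ) : Prop :=
  Hol f ∧ ∃ g : ℕ → ℂ → ℂ, (∀ r, Hol (g r)) ∧
    ∀ γ ∈ Γ, ∀ z ∈ UHP,
      jJ γ z ^ (-ξ) * f (mact γ z) = ∑ r ∈ Finset.range (m + 1), g r z * kK γ z ^ r

/-- The factorial `t!` of an integer `t` (equal to `(t.toNat)!`; intended for `t ≥ 0`). -/
def zfact (t : ℤ) : ℂ := (t.toNat.factorial : ℂ)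

-- STATEMENT 14 def
/-- The Cohen–Kuznetsov lifting `Ξ̂_δ f` of a modular form `f` of weight `w`. -/
def XiHat (w : ℤ) (δ : ℕ) (f : ℂ → ℂ) : ℂ → PowerSeries ℂ := fun z =>
  PowerSeries.mk fun N =>
    if δ ≤ N then
      zfact (w - 1) * deriv^[N - δ] f z /
        (((N - δ).factorial : ℂ) * zfact (((N - δ : ℕ) : ℤ) + w - 1))
    else 0


/-!
The top coefficient `f = 𝔖_m F` is a modular form of weight `w = ξ - 2m`, and
`G = m! Π^δ_m(Ξ̂_δ f) = Σ_{k ≤ m} m! (w-1)! / ((m-k)! (m-k+w-1)! k!) f^{(m-k)} X^k` also has top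
coefficient `f`, so everything comes down to `G ∈ QP^m_ξ(Γ)`. Differentiating `f(γz) = 𝔍^w f(z)`
repeatedly gives `f^{(n)}(γz) = 𝔍^{w+2n} Σ_s C(n,s) (n+w-1)!/(s+w-1)! 𝔎^{n-s} f^{(s)}(z)`.
Substituted into `G ‖_ξ γ`, all powers of `𝔍` cancel and the coefficient of `𝔎^u f^{(s)} X^t`
becomes a multiple of the alternating sum `Σ_j (-1)^j C(u,j)`, which vanishes unless `u = 0`.
-/

open Finset

lemma isOpen_UHP : IsOpen UHP := isOpen_lt continuous_const Complex.continuous_im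

section Mobius

variable (γ : SL2R)

lemma SL2R.det_eq_one : (γ 0 0 : ℝ) * γ 1 1 - γ 0 1 * γ 1 0 = 1 := by
  have h := γ.2
  rwa [Matrix.det_fin_two] at h

lemma jJ_ne_zero {z : ℂ} (hz : z ∈ UHP) : jJ γ z ≠ 0 := by
  intro h
  have hc : (γ 1 0 : ℝ) = 0 := by
    have him := congrArg Complex.im h
    simp only [jJ, add_im, mul_im, ofReal_re, ofReal_im, zero_mul, add_zero, zero_im] at him
    exact (mul_eq_zero.1 him).resolve_right (ne_of_gt hz)
  have hd : (γ 1 1 : ℝ) = 0 := by exact_mod_cast (by simpa [jJ, hc] using h : ((γ 1 1 : ℝ) : ℂ) = 0)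
  simpa [hc, hd] using SL2R.det_eq_one γ

lemma im_mact (z : ℂ) : (mact γ z).im = z.im / normSq (jJ γ z) := by
  rw [mact, div_im, div_sub_div_same]
  congr 1
  simp only [jJ, add_im, add_re, mul_im, mul_re, ofReal_im, ofReal_re]
  linear_combination z.im * SL2R.det_eq_one γ

lemma mact_mem_UHP {z : ℂ} (hz : z ∈ UHP) : mact γ z ∈ UHP := by
  show 0 < (mact γ z).im
  rw [im_mact]
  exact div_pos hz (normSq_pos.2 (jJ_ne_zero γ hz))

lemma kK_mul_jJ {z : ℂ} (hz : z ∈ UHP) : kK γ z * jJ γ z = (γ 1 0 : ℝ) :=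
  div_mul_cancel₀ _ (jJ_ne_zero γ hz)

lemma hasDerivAt_jJ (z : ℂ) : HasDerivAt (jJ γ) ((γ 1 0 : ℝ) : ℂ) z :=
  (((hasDerivAt_id z).const_mul ((γ 1 0 : ℝ) : ℂ)).add_const ((γ 1 1 : ℝ) : ℂ)).congr_deriv
    (mul_one _)

lemma hasDerivAt_kK {z : ℂ} (hz : z ∈ UHP) : HasDerivAt (kK γ) (-kK γ z ^ 2) z := by
  refine ((hasDerivAt_const z ((γ 1 0 : ℝ) : ℂ)).div (hasDerivAt_jJ γ z)
    (jJ_ne_zero γ hz)).congr_deriv ?_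
  simp only [kK]
  ring

lemma hasDerivAt_mact {z : ℂ} (hz : z ∈ UHP) : HasDerivAt (mact γ) (jJ γ z ^ 2)⁻¹ z := by
  have hnum : HasDerivAt (fun z : ℂ => ((γ 0 0 : ℝ) : ℂ) * z + ((γ 0 1 : ℝ) : ℂ))
      ((γ 0 0 : ℝ) : ℂ) z := by
    simpa using ((hasDerivAt_id z).const_mul ((γ 0 0 : ℝ) : ℂ)).add_const ((γ 0 1 : ℝ) : ℂ)
  refine (hnum.div (hasDerivAt_jJ γ z) (jJ_ne_zero γ hz)).congr_deriv ?_
  have hdet : ((γ 0 0 : ℝ) : ℂ) * (γ 1 1 : ℝ) - ((γ 0 1 : ℝ) : ℂ) * (γ 1 0 : ℝ) = 1 := by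
    exact_mod_cast SL2R.det_eq_one γ
  rw [inv_eq_one_div]
  congr 1
  simp only [jJ]
  linear_combination hdet

end Mobius

lemma Hol.iterate_deriv {f : ℂ → ℂ} (hf : Hol f) : ∀ n, Hol (deriv^[n] f)
  | 0 => hf
  | n + 1 => by
    rw [Function.iterate_succ_apply']
    exact ((hf.iterate_deriv n).analyticOnNhd isOpen_UHP).deriv.differentiableOn

lemma Hol.hasDerivAt_iterate_deriv {f : ℂ → ℂ} (hf : Hol f) (n : ℕ) {z : ℂ} (hz : z ∈ UHP) :
    HasDerivAt (deriv^[n] f) (deriv^[n + 1] f z) z := by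
  rw [Function.iterate_succ_apply']
  exact ((hf.iterate_deriv n).differentiableAt (isOpen_UHP.mem_nhds hz)).hasDerivAt

lemma natCast_factorial_ne_zero (k : ℕ) : (k.factorial : ℂ) ≠ 0 :=
  Nat.cast_ne_zero.2 k.factorial_ne_zero

-- A weight `w ≥ 1` is written `W + 1` with `W : ℕ`, so that `(w - 1)!` is a factorial in `ℕ`.
def derivTransCoeff (W n s : ℕ) : ℂ := (n.choose s : ℂ) * (n + W).factorial / (s + W).factorial

lemma derivTransCoeff_eq_zero_of_lt {W n s : ℕ} (h : n < s) : derivTransCoeff W n s = 0 := by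
  simp [derivTransCoeff, Nat.choose_eq_zero_of_lt h]

lemma derivTransCoeff_self (W n : ℕ) : derivTransCoeff W n n = 1 := by
  simp only [derivTransCoeff, Nat.choose_self, Nat.cast_one, one_mul]
  exact div_self (natCast_factorial_ne_zero _)

lemma derivTransCoeff_succ_zero (W n : ℕ) :
    derivTransCoeff W (n + 1) 0 = ((W + n + 1 : ℕ) : ℂ) * derivTransCoeff W n 0 := by
  simp only [derivTransCoeff, Nat.choose_zero_right, Nat.cast_one, one_mul,
    show n + 1 + W = (n + W) + 1 by ring, Nat.factorial_succ]
  push_cast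
  ring

lemma derivTransCoeff_succ_succ (W n i : ℕ) :
    ((W + n + i + 2 : ℕ) : ℂ) * derivTransCoeff W n (i + 1) + derivTransCoeff W n i
      = derivTransCoeff W (n + 1) (i + 1) := by
  have pascal : ((n + 1).choose (i + 1) : ℂ) = n.choose i + n.choose (i + 1) := by
    exact_mod_cast Nat.choose_succ_succ n i
  have absorb : ((n + 1 : ℕ) : ℂ) * n.choose i = (n + 1).choose (i + 1) * ((i + 1 : ℕ) : ℂ) := by
    exact_mod_cast Nat.add_one_mul_choose_eq n i
  have hn : ((n + 1 + W).factorial : ℂ) = ((n + W + 1 : ℕ) : ℂ) * (n + W).factorial := by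
    rw [show n + 1 + W = (n + W) + 1 by ring, Nat.factorial_succ, Nat.cast_mul]
  have hi : ((i + 1 + W).factorial : ℂ) = ((i + W + 1 : ℕ) : ℂ) * (i + W).factorial := by
    rw [show i + 1 + W = (i + W) + 1 by ring, Nat.factorial_succ, Nat.cast_mul]
  have hi0 : ((i + W + 1 : ℕ) : ℂ) ≠ 0 := Nat.cast_ne_zero.2 (Nat.succ_ne_zero _)
  have := natCast_factorial_ne_zero (i + W)
  simp only [derivTransCoeff, hn, hi]
  field_simp
  push_cast at absorb ⊢
  linear_combination ((n + W).factorial : ℂ) * (-((W : ℂ) + n + i + 2) * pascal - absorb)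

def derivTransSum (W n : ℕ) (K : ℂ) (g : ℕ → ℂ) : ℂ :=
  ∑ s ∈ range (n + 1), derivTransCoeff W n s * K ^ (n - s) * g s

lemma derivTransSum_succ (W n : ℕ) (K : ℂ) (g : ℕ → ℂ) :
    ((W + 1 + 2 * n : ℕ) : ℂ) * K * derivTransSum W n K g
      + ∑ s ∈ range (n + 1), derivTransCoeff W n s
          * (-((n - s : ℕ) : ℂ) * K ^ (n - s + 1) * g s + K ^ (n - s) * g (s + 1))
      = derivTransSum W (n + 1) K g := by
  have hlow : ∀ s ∈ range (n + 1),
      ((W + 1 + 2 * n : ℕ) : ℂ) * K * (derivTransCoeff W n s * K ^ (n - s) * g s)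
        + derivTransCoeff W n s * (-((n - s : ℕ) : ℂ) * K ^ (n - s + 1) * g s)
      = ((W + n + 1 + s : ℕ) : ℂ) * derivTransCoeff W n s * K ^ (n + 1 - s) * g s := by
    intro s hs
    have hsn : s ≤ n := Nat.lt_succ_iff.mp (mem_range.mp hs)
    rw [show n + 1 - s = n - s + 1 by omega, pow_succ]
    push_cast [hsn]
    ring
  have hshift : ∑ s ∈ range (n + 1),
        ((W + n + 1 + s : ℕ) : ℂ) * derivTransCoeff W n s * K ^ (n + 1 - s) * g s
      = ∑ i ∈ range (n + 1), ((W + n + i + 2 : ℕ) : ℂ) * derivTransCoeff W n (i + 1)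
            * K ^ (n - i) * g (i + 1)
          + derivTransCoeff W (n + 1) 0 * K ^ (n + 1) * g 0 := by
    conv_rhs => rw [sum_range_succ, derivTransCoeff_eq_zero_of_lt (Nat.lt_succ_self n)]
    rw [sum_range_succ', derivTransCoeff_succ_zero]
    simp only [mul_zero, zero_mul, add_zero, Nat.sub_zero]
    congr 1
    refine sum_congr rfl fun i _ => ?_
    rw [show W + n + 1 + (i + 1) = W + n + i + 2 by ring, show n + 1 - (i + 1) = n - i by omega]
  simp only [derivTransSum, mul_sum, mul_add, ← add_assoc, sum_add_distrib]
  rw [← sum_add_distrib, sum_congr rfl hlow, hshift, sum_range_succ' _ (n + 1)]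
  simp only [← derivTransCoeff_succ_succ, add_mul, sum_add_distrib,
    show ∀ i, n + 1 - (i + 1) = n - i from fun i => by omega, Nat.sub_zero, mul_assoc]
  ring

lemma derivTransSum_eq_sum_range {W n N : ℕ} (h : n ≤ N) (K : ℂ) (g : ℕ → ℂ) :
    derivTransSum W n K g = ∑ s ∈ range (N + 1), derivTransCoeff W n s * K ^ (n - s) * g s :=
  sum_subset (range_subset_range.2 (by omega)) fun s hs hs' => by
    simp [derivTransCoeff_eq_zero_of_lt (show n < s by simp only [mem_range] at hs hs'; omega)]

lemma hasDerivAt_derivTransSum {f : ℂ → ℂ} (hf : Hol f) (γ : SL2R) (W n : ℕ) {z : ℂ}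
    (hz : z ∈ UHP) :
    HasDerivAt (fun x => derivTransSum W n (kK γ x) fun s => deriv^[s] f x)
      (∑ s ∈ range (n + 1), derivTransCoeff W n s * (-((n - s : ℕ) : ℂ) * kK γ z ^ (n - s + 1)
        * deriv^[s] f z + kK γ z ^ (n - s) * deriv^[s + 1] f z)) z := by
  refine HasDerivAt.fun_sum fun s _ => ?_
  have hpow : ((n - s : ℕ) : ℂ) * kK γ z ^ (n - s - 1) * -kK γ z ^ 2
      = -((n - s : ℕ) : ℂ) * kK γ z ^ (n - s + 1) := by
    rcases Nat.eq_zero_or_pos (n - s) with h | h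
    · simp [h]
    · rw [show n - s + 1 = n - s - 1 + 2 by omega, pow_add]
      ring
  refine ((((hasDerivAt_kK γ hz).fun_pow (n - s)).const_mul (derivTransCoeff W n s)).fun_mul
    (hf.hasDerivAt_iterate_deriv s hz)).congr_deriv ?_
  rw [hpow]
  ring

lemma iterate_deriv_mact {f : ℂ → ℂ} (hf : Hol f) (γ : SL2R) (W : ℕ)
    (hmod : ∀ z ∈ UHP, f (mact γ z) = jJ γ z ^ (W + 1) * f z) (n : ℕ) :
    ∀ z ∈ UHP, deriv^[n] f (mact γ z)
      = jJ γ z ^ (W + 1 + 2 * n) * derivTransSum W n (kK γ z) fun s => deriv^[s] f z := by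
  induction n with
  | zero =>
    intro z hz
    simp [derivTransSum, derivTransCoeff_self, hmod z hz]
  | succ n ih =>
    intro z hz
    have hJ := jJ_ne_zero γ hz
    have hlhs : HasDerivAt (fun x => deriv^[n] f (mact γ x)) _ z :=
      (hf.hasDerivAt_iterate_deriv n (mact_mem_UHP γ hz)).comp z (hasDerivAt_mact γ hz)
    have hrhs := ((hasDerivAt_jJ γ z).fun_pow (W + 1 + 2 * n)).fun_mul
      (hasDerivAt_derivTransSum hf γ W n hz)
    have heq := Filter.EventuallyEq.deriv_eq (Filter.eventuallyEq_of_mem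
      (isOpen_UHP.mem_nhds hz) ih)
    rw [hlhs.deriv, hrhs.deriv, mul_inv_eq_iff_eq_mul₀ (pow_ne_zero 2 hJ)] at heq
    rw [heq, ← derivTransSum_succ, ← kK_mul_jJ γ hz,
      show W + 1 + 2 * n - 1 = W + 2 * n by omega]
    ring

lemma Polynomial.coeff_comp_C_mul_X_sub_C {R : Type*} [CommRing R] (p : R[X]) {m : ℕ}
    (hp : p.natDegree < m + 1) (b e : R) (t : ℕ) :
    (p.comp (C b * (X - C e))).coeff t
      = ∑ k ∈ range (m + 1), p.coeff k * b ^ k * (-e) ^ (k - t) * (k.choose t : R) := by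
  conv_lhs => rw [p.as_sum_range' (m + 1) hp]
  rw [sum_comp, finsetSum_coeff]
  refine sum_congr rfl fun k _ => ?_
  rw [← C_mul_X_pow_eq_monomial, mul_comp, C_comp, X_pow_comp, mul_pow, ← C_pow, sub_eq_add_neg,
    ← C_neg, coeff_C_mul, coeff_C_mul, coeff_X_add_C_pow]
  ring

lemma coeff_polyAct (ξ : ℤ) (F : ℂ → ℂ[X]) (γ : SL2R) (z : ℂ) {m : ℕ}
    (hF : (F (mact γ z)).natDegree < m + 1) (t : ℕ) :
    (polyAct ξ F γ z).coeff t = jJ γ z ^ (-ξ) * ∑ k ∈ range (m + 1),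
      (F (mact γ z)).coeff k * (jJ γ z ^ 2) ^ k * (-kK γ z) ^ (k - t) * (k.choose t : ℂ) := by
  rw [polyAct, coeff_C_mul, coeff_comp_C_mul_X_sub_C _ hF]

lemma zfact_natCast (k : ℕ) : zfact k = k.factorial := by
  simp [zfact]

lemma coeff_XiHat (W δ : ℕ) (f : ℂ → ℂ) (z : ℂ) (j : ℕ) :
    PowerSeries.coeff (j + δ) (XiHat ((W : ℤ) + 1) δ f z)
      = W.factorial * deriv^[j] f z / (j.factorial * (j + W).factorial) := by
  rw [XiHat, PowerSeries.coeff_mk, if_pos (Nat.le_add_left δ j), Nat.add_sub_cancel,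
    add_sub_cancel_right, show (j : ℤ) + (W + 1) - 1 = ((j + W : ℕ) : ℤ) by push_cast; ring,
    zfact_natCast, zfact_natCast]

def liftCoeff (W m k : ℕ) : ℂ :=
  m.factorial * W.factorial / ((m - k).factorial * (m - k + W).factorial * k.factorial)

lemma liftCoeff_self (W m : ℕ) : liftCoeff W m m = 1 := by
  have := natCast_factorial_ne_zero W
  have := natCast_factorial_ne_zero m
  simp only [liftCoeff, Nat.sub_self, Nat.factorial_zero, Nat.cast_one, one_mul, zero_add]
  field_simp

def liftPoly (W m δ : ℕ) (f : ℂ → ℂ) (z : ℂ) : ℂ[X] :=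
  C (m.factorial : ℂ) * PiDM δ m (XiHat ((W : ℤ) + 1) δ f) z

lemma coeff_liftPoly (W m δ : ℕ) (f : ℂ → ℂ) (z : ℂ) (t : ℕ) :
    (liftPoly W m δ f z).coeff t = if t ≤ m then liftCoeff W m t * deriv^[m - t] f z else 0 := by
  simp only [liftPoly, PiDM, coeff_C_mul, finsetSum_coeff, coeff_X_pow, mul_ite, mul_one,
    mul_zero, sum_ite_eq, mem_range, Nat.lt_succ_iff]
  split_ifs with ht
  · rw [coeff_XiHat, liftCoeff]
    field_simp
  · rfl

lemma natDegree_liftPoly_lt (W m δ : ℕ) (f : ℂ → ℂ) (z : ℂ) :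
    (liftPoly W m δ f z).natDegree < m + 1 := by
  rw [Nat.lt_succ_iff, natDegree_le_iff_coeff_eq_zero]
  intro N hN
  rw [coeff_liftPoly, if_neg (by exact_mod_cast hN.not_ge)]

lemma liftCoeff_mul_derivTransCoeff_mul_choose (W t u s j : ℕ) (hj : j ≤ u) :
    liftCoeff W (t + u + s) (t + j) * derivTransCoeff W (t + u + s - (t + j)) s
        * ((t + j).choose t : ℂ)
      = (t + u + s).factorial * W.factorial
          / (t.factorial * s.factorial * u.factorial * (s + W).factorial) * (u.choose j : ℂ) := by
  rw [liftCoeff, derivTransCoeff, show t + u + s - (t + j) = s + (u - j) by omega,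
    Nat.cast_choose ℂ (Nat.le_add_right s (u - j)), Nat.cast_choose ℂ (Nat.le_add_right t j),
    Nat.cast_choose ℂ hj, Nat.add_sub_cancel_left, Nat.add_sub_cancel_left]
  have := natCast_factorial_ne_zero (s + (u - j) + W)
  have := natCast_factorial_ne_zero (s + (u - j))
  have := natCast_factorial_ne_zero (t + j)
  have := natCast_factorial_ne_zero u
  field_simp

lemma sum_liftCoeff_mul_derivTransCoeff (W m t s : ℕ) (ht : t ≤ m) (K : ℂ) :
    ∑ k ∈ range (m + 1), liftCoeff W m k * derivTransCoeff W (m - k) s * (-K) ^ (k - t)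
        * K ^ (m - k - s) * (k.choose t : ℂ)
      = if s = m - t then liftCoeff W m t else 0 := by
  have hzero : ∀ k, (k < t ∨ m - k < s) → liftCoeff W m k * derivTransCoeff W (m - k) s
      * (-K) ^ (k - t) * K ^ (m - k - s) * (k.choose t : ℂ) = 0 := by
    rintro k (hk | hk)
    · simp [Nat.choose_eq_zero_of_lt hk]
    · simp [derivTransCoeff_eq_zero_of_lt hk]
  by_cases hst : s + t ≤ m
  swap
  · rw [if_neg (by omega)]
    exact sum_eq_zero fun k _ => hzero k (by omega)
  obtain ⟨u, rfl⟩ : ∃ u, m = t + u + s := ⟨m - t - s, by omega⟩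
  have hsupp : Ico t (t + u + 1) ⊆ range (t + u + s + 1) := fun k hk => by
    simp only [mem_Ico, mem_range] at hk ⊢
    omega
  have hout : ∀ k ∈ range (t + u + s + 1), k ∉ Ico t (t + u + 1) → k < t ∨ t + u + s - k < s :=
    fun k hk hk' => by
      simp only [mem_Ico, mem_range] at hk hk'
      omega
  rw [← sum_subset hsupp fun k hk hk' => hzero k (hout k hk hk'), sum_Ico_eq_sum_range, show t + u + 1 - t = u + 1 by omega]
  have hterm : ∀ j ∈ range (u + 1),
      liftCoeff W (t + u + s) (t + j) * derivTransCoeff W (t + u + s - (t + j)) s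
          * (-K) ^ (t + j - t) * K ^ (t + u + s - (t + j) - s) * ((t + j).choose t : ℂ)
        = (t + u + s).factorial * W.factorial
            / (t.factorial * s.factorial * u.factorial * (s + W).factorial) * K ^ u
            * ((-1) ^ j * (u.choose j : ℂ)) := by
    intro j hj
    have hju : j ≤ u := Nat.lt_succ_iff.mp (mem_range.mp hj)
    rw [Nat.add_sub_cancel_left, show t + u + s - (t + j) - s = u - j by omega, neg_pow,
      show K ^ u = K ^ j * K ^ (u - j) by rw [← pow_add, Nat.add_sub_cancel' hju]]
    linear_combination (-1) ^ j * K ^ j * K ^ (u - j)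
      * liftCoeff_mul_derivTransCoeff_mul_choose W t u s j hju
  have halt : ∑ j ∈ range (u + 1), (-1 : ℂ) ^ j * (u.choose j : ℂ) = if u = 0 then 1 else 0 := by
    exact_mod_cast Int.alternating_sum_range_choose (n := u)
  rw [sum_congr rfl hterm, ← mul_sum, halt]
  rcases Nat.eq_zero_or_pos u with rfl | hu
  · rw [if_pos rfl, if_pos (by omega), liftCoeff, show t + 0 + s - t = s by omega]
    simp only [add_zero, pow_zero, mul_one, Nat.factorial_zero, Nat.cast_one]
    ring
  · rw [if_neg hu.ne', if_neg (by omega), mul_zero]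

lemma polyAct_liftPoly {f : ℂ → ℂ} (hf : Hol f) (γ : SL2R) (W m δ : ℕ)
    (hmod : ∀ z ∈ UHP, f (mact γ z) = jJ γ z ^ (W + 1) * f z) {z : ℂ} (hz : z ∈ UHP) :
    polyAct ((W : ℤ) + 1 + 2 * m) (liftPoly W m δ f) γ z = liftPoly W m δ f z := by
  ext t
  rw [coeff_polyAct _ _ _ _ (natDegree_liftPoly_lt W m δ f _), coeff_liftPoly]
  split_ifs with ht
  swap
  · rw [sum_eq_zero, mul_zero]
    intro k hk
    simp [Nat.choose_eq_zero_of_lt (show k < t by simp only [mem_range] at hk; omega)]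
  have hJ := jJ_ne_zero γ hz
  have hcollapse : ∀ k ≤ m, jJ γ z ^ (-((W : ℤ) + 1 + 2 * m)) * (jJ γ z ^ 2) ^ k
      * jJ γ z ^ (W + 1 + 2 * (m - k)) = 1 := by
    intro k hk
    rw [mul_assoc, ← pow_mul, ← pow_add, ← zpow_natCast, ← zpow_add₀ hJ]
    convert zpow_zero (jJ γ z)
    push_cast [hk]
    ring
  have hterm : ∀ k ∈ range (m + 1),
      jJ γ z ^ (-((W : ℤ) + 1 + 2 * m)) * ((liftPoly W m δ f (mact γ z)).coeff k
          * (jJ γ z ^ 2) ^ k * (-kK γ z) ^ (k - t) * (k.choose t : ℂ))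
        = ∑ s ∈ range (m + 1), liftCoeff W m k * derivTransCoeff W (m - k) s
            * (-kK γ z) ^ (k - t) * kK γ z ^ (m - k - s) * (k.choose t : ℂ) * deriv^[s] f z := by
    intro k hk
    have hkm : k ≤ m := Nat.lt_succ_iff.mp (mem_range.mp hk)
    rw [coeff_liftPoly, if_pos hkm, iterate_deriv_mact hf γ W hmod (m - k) z hz,
      derivTransSum_eq_sum_range (Nat.sub_le m k)]
    simp only [mul_sum, sum_mul]
    refine sum_congr rfl fun s _ => ?_
    linear_combination (liftCoeff W m k * derivTransCoeff W (m - k) s * (-kK γ z) ^ (k - t)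
      * kK γ z ^ (m - k - s) * (k.choose t : ℂ) * deriv^[s] f z) * hcollapse k hkm
  rw [mul_sum, sum_congr rfl hterm, sum_comm]
  simp only [← sum_mul, sum_liftCoeff_mul_derivTransCoeff W m t _ ht, ite_mul, zero_mul,
    sum_ite_eq', mem_range]
  rw [if_pos (by omega)]

section QuasimodularPolynomials

variable {Γ : Subgroup SL2R}

lemma IsModular.apply_mact {W : ℕ} {f : ℂ → ℂ} (hf : IsModular Γ ((W : ℤ) + 1) f) {γ : SL2R}
    (hγ : γ ∈ Γ) {z : ℂ} (hz : z ∈ UHP) : f (mact γ z) = jJ γ z ^ (W + 1) * f z := by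
  have h := hf.2 γ hγ z hz
  rwa [zpow_neg, show ((W : ℤ) + 1) = ((W + 1 : ℕ) : ℤ) by push_cast; ring, zpow_natCast,
    inv_mul_eq_iff_eq_mul₀ (pow_ne_zero _ (jJ_ne_zero γ hz))] at h

lemma isQP_liftPoly {W m δ : ℕ} {f : ℂ → ℂ} (hf : IsModular Γ ((W : ℤ) + 1) f) :
    IsQP Γ ((W : ℤ) + 1 + 2 * m) m (liftPoly W m δ f) := by
  refine ⟨⟨fun z => degree_le_of_natDegree_le (Nat.lt_succ_iff.mp (natDegree_liftPoly_lt ..)),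
    fun r => ?_⟩, fun γ hγ z hz => polyAct_liftPoly hf.1 γ W m δ (fun _ => hf.apply_mact hγ) hz⟩
  simp only [coeff_liftPoly]
  split_ifs
  · exact (hf.1.iterate_deriv _).const_mul _
  · exact differentiableOn_const 0

lemma IsQP.isModular_coeff {w : ℤ} {m : ℕ} {F : ℂ → ℂ[X]} (hF : IsQP Γ (w + 2 * m) m F) :
    IsModular Γ w fun z => (F z).coeff m := by
  refine ⟨hF.1.2 m, fun γ hγ z hz => ?_⟩
  have h := congrArg (coeff · m) (hF.2 γ hγ z hz)
  rw [coeff_polyAct _ _ _ _ (Nat.lt_succ_of_le (natDegree_le_of_degree_le (hF.1.1 _))),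
    sum_eq_single_of_mem m (self_mem_range_succ m) fun k hk hkm => by
      simp [Nat.choose_eq_zero_of_lt (show k < m by simp only [mem_range] at hk; omega)]] at h
  show _ = (F z).coeff m
  rw [← h, Nat.sub_self, pow_zero, Nat.choose_self, Nat.cast_one, mul_one, mul_one, ← pow_mul,
    ← zpow_natCast, mul_comm _ (_ ^ ((2 * m : ℕ) : ℤ)), ← mul_assoc,
    ← zpow_add₀ (jJ_ne_zero γ hz)]
  congr 2
  push_cast
  ring

lemma IsQP.sub {ξ : ℤ} {m : ℕ} {F G : ℂ → ℂ[X]} (hF : IsQP Γ ξ m F) (hG : IsQP Γ ξ m G) :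
    IsQP Γ ξ m fun z => F z - G z := by
  refine ⟨⟨fun z => (degree_sub_le _ _).trans (max_le (hF.1.1 z) (hG.1.1 z)), fun r => ?_⟩,
    fun γ hγ z hz => ?_⟩
  · simp only [coeff_sub]
    exact (hF.1.2 r).sub (hG.1.2 r)
  · show _ = F z - G z
    rw [← hF.2 γ hγ z hz, ← hG.2 γ hγ z hz]
    simp only [polyAct, sub_comp, mul_sub]

lemma IsQP.of_coeff_eq_zero {ξ : ℤ} {m : ℕ} {F : ℂ → ℂ[X]} (hF : IsQP Γ ξ m F)
    (h : ∀ z, (F z).coeff m = 0) : IsQP Γ ξ (m - 1) F := by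
  refine ⟨⟨fun z => ?_, hF.1.2⟩, hF.2⟩
  rw [degree_le_iff_coeff_zero]
  intro N hN
  have hmN : m ≤ N := by
    have : m - 1 < N := by exact_mod_cast hN
    omega
  rcases hmN.eq_or_lt with rfl | hlt
  · exact h z
  · exact coeff_eq_zero_of_degree_lt ((hF.1.1 z).trans_lt (by exact_mod_cast hlt))

end QuasimodularPolynomials

theorem stmt14_general (Γ : Subgroup SL2R) (m : ℕ)
    (ξ : ℤ) (hξ : 2 * (m : ℤ) < ξ) (δ : ℕ)
    (F : ℂ → Polynomial ℂ) (hF : IsQP Γ ξ m F) :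
    IsQP Γ ξ (m - 1) fun z =>
      F z - Polynomial.C (m.factorial : ℂ) *
        PiDM δ m (XiHat (ξ - 2 * m) δ fun w => (F w).coeff m) z := by
  obtain ⟨W, hW⟩ : ∃ W : ℕ, ξ - 2 * m = (W : ℤ) + 1 := ⟨(ξ - 2 * m - 1).toNat, by omega⟩
  obtain rfl : ξ = W + 1 + 2 * m := by omega
  rw [hW]
  refine (hF.sub (isQP_liftPoly (δ := δ) hF.isModular_coeff)).of_coeff_eq_zero fun z => ?_
  rw [coeff_sub, coeff_liftPoly, if_pos le_rfl, liftCoeff_self, Nat.sub_self,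
    Function.iterate_zero_apply, one_mul, sub_self]

theorem stmt14 (Γ : Subgroup SL2R) (hΓ : DiscreteTopology Γ) (m : ℕ) (hm : 1 ≤ m)
    (ξ : ℤ) (hξ : 2 * (m : ℤ) < ξ) (δ : ℕ)
    (F : ℂ → Polynomial ℂ) (hF : IsQP Γ ξ m F) :
    IsQP Γ ξ (m - 1) fun z =>
      F z - Polynomial.C (m.factorial : ℂ) *
        PiDM δ m (XiHat (ξ - 2 * m) δ fun w => (F w).coeff m) z :=
  stmt14_general Γ m ξ hξ δ F hF
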